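/- Let Z ≥ 1 with E[e^{-sZ}] = 1 - exp(-∫_{[0,∞)} e^{-s(1+x)}/(1+x) t(dx)) for a Radon measure t on [0,∞). Then for any a ∈ (1, 2] and any s ≥ 0: E[e^{-sZ}; Z < a] = ∫_{[0,a-1)} e^{-s(1+x)}/(1+x) t(dx). -/

import Mathlib

/-!
Let `ν` be the law of `Z` and `m` the image of `t(dx) / (1 + x)`, `x ≥ 0`, under `x ↦ 1 + x`. The
hypothesis says that the Laplace transforms satisfy `L_ν = 1 - exp (-L_m)`, i.e.
`L_m = -log (1 - L_ν) = ∑_{k ≥ 1} L_ν ^ k / k`, which is the Laplace transform of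
`∑_{k ≥ 1} ν^{∗k} / k`. Laplace transforms of measures on `[0, ∞)` determine the measure (after the
substitution `y = e^{-x}` this is uniqueness in the Hausdorff moment problem on `[0, 1]`, a
consequence of the Weierstrass approximation theorem), so `m = ∑_{k ≥ 1} ν^{∗k} / k`. As `ν` lives
on `[1, ∞)`, `ν^{∗k}` lives on `[k, ∞)`, and below `2` only the term `k = 1` survives: `m = ν` on
`(-∞, 2)`, which is the claim.
-/

open MeasureTheory Measure Real Set Filter
open scoped ENNReal

noncomputable section

def laplace (A : Measure ℝ) (s : ℝ) : ℝ≥0∞ :=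
  ∫⁻ x, ENNReal.ofReal (exp (-s * x)) ∂A

lemma integral_exp_neg_mul_eq_toReal_laplace (A : Measure ℝ) (s : ℝ) :
    ∫ x, exp (-s * x) ∂A = (laplace A s).toReal :=
  integral_eq_lintegral_of_nonneg_ae (ae_of_all _ fun _ => (exp_pos _).le) (by fun_prop)

lemma laplace_le_measure_univ {A : Measure ℝ} (hA : ∀ᵐ x ∂A, 0 ≤ x) {s : ℝ} (hs : 0 ≤ s) :
    laplace A s ≤ A univ := by
  rw [← setLIntegral_one, setLIntegral_univ]
  refine lintegral_mono_ae (hA.mono fun x hx => ?_)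
  rw [ENNReal.ofReal_le_one, exp_le_one_iff]
  nlinarith

lemma laplace_ne_zero (A : Measure ℝ) [NeZero A] (s : ℝ) : laplace A s ≠ 0 := by
  rw [laplace, ne_eq, lintegral_eq_zero_iff (by fun_prop)]
  intro h
  have hfalse : ∀ᵐ x ∂A, False :=
    h.mono fun _ hx => (exp_pos _).not_ge (ENNReal.ofReal_eq_zero.mp hx)
  exact NeZero.ne A (ae_eq_bot.mp (eventually_false_iff_eq_bot.mp hfalse))

section Moments

variable {P Q : Measure ℝ} {a b : ℝ}

lemma integrable_of_ae_mem_Icc [IsFiniteMeasure P] (hP : ∀ᵐ y ∂P, y ∈ Icc a b) {f : ℝ → ℝ}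
    (hf : Continuous f) : Integrable f P := by
  rw [← restrict_eq_self_of_ae_mem hP]
  exact hf.integrableOn_Icc

variable [IsFiniteMeasure P] [IsFiniteMeasure Q]

lemma integral_eval_eq_of_integral_pow_eq (hP : ∀ᵐ y ∂P, y ∈ Icc a b)
    (hQ : ∀ᵐ y ∂Q, y ∈ Icc a b) (hmom : ∀ n : ℕ, ∫ y, y ^ n ∂P = ∫ y, y ^ n ∂Q)
    (p : Polynomial ℝ) : ∫ y, p.eval y ∂P = ∫ y, p.eval y ∂Q := by
  simp_rw [p.eval_eq_sum_range]
  rw [integral_finsetSum _ fun i _ => integrable_of_ae_mem_Icc hP (by fun_prop),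
    integral_finsetSum _ fun i _ => integrable_of_ae_mem_Icc hQ (by fun_prop)]
  simp_rw [integral_const_mul, hmom]

lemma abs_integral_sub_integral_le (hP : ∀ᵐ y ∂P, y ∈ Icc a b) {f g : ℝ → ℝ}
    (hf : Continuous f) (hg : Continuous g) {ε : ℝ} (hfg : ∀ y ∈ Icc a b, |f y - g y| ≤ ε) :
    |∫ y, f y ∂P - ∫ y, g y ∂P| ≤ ε * P.real univ := by
  rw [← integral_sub (integrable_of_ae_mem_Icc hP hf) (integrable_of_ae_mem_Icc hP hg)]
  exact norm_integral_le_of_norm_le_const (hP.mono fun y hy => (norm_eq_abs _).trans_le (hfg y hy))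

theorem eq_of_integral_pow_eq (hP : ∀ᵐ y ∂P, y ∈ Icc a b) (hQ : ∀ᵐ y ∂Q, y ∈ Icc a b)
    (hmom : ∀ n : ℕ, ∫ y, y ^ n ∂P = ∫ y, y ^ n ∂Q) : P = Q := by
  refine ext_of_forall_integral_eq_of_IsFiniteMeasure fun f => eq_of_forall_dist_le fun ε hε => ?_
  set δ := ε / (P.real univ + Q.real univ + 1)
  have hδ : δ * P.real univ + δ * Q.real univ ≤ ε := by
    rw [← mul_add, div_mul_eq_mul_div, div_le_iff₀ (by positivity)]
    nlinarith [measureReal_nonneg (μ := P) (s := univ), measureReal_nonneg (μ := Q) (s := univ)]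
  obtain ⟨p, hp⟩ := exists_polynomial_near_of_continuousOn a b f f.continuous.continuousOn δ
    (by positivity)
  have hfp : ∀ y ∈ Icc a b, |f y - p.eval y| ≤ δ := fun y hy => by
    rw [abs_sub_comm]; exact (hp y hy).le
  calc dist (∫ y, f y ∂P) (∫ y, f y ∂Q)
      = |(∫ y, f y ∂P - ∫ y, p.eval y ∂P) - (∫ y, f y ∂Q - ∫ y, p.eval y ∂Q)| := by
        rw [dist_eq, integral_eval_eq_of_integral_pow_eq hP hQ hmom p, sub_sub_sub_cancel_right]
    _ ≤ |∫ y, f y ∂P - ∫ y, p.eval y ∂P| + |∫ y, f y ∂Q - ∫ y, p.eval y ∂Q| := abs_sub _ _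
    _ ≤ δ * P.real univ + δ * Q.real univ :=
        add_le_add (abs_integral_sub_integral_le hP f.continuous (by fun_prop) hfp)
          (abs_integral_sub_integral_le hQ f.continuous (by fun_prop) hfp)
    _ ≤ ε := hδ

end Moments

section LaplaceUniqueness

def laplaceMomentMeasure (A : Measure ℝ) : Measure ℝ :=
  (A.withDensity fun x => ENNReal.ofReal (exp (-x))).map fun x => exp (-x)

lemma measurableEmbedding_exp_neg : MeasurableEmbedding fun x : ℝ => exp (-x) :=
  (continuous_exp.comp continuous_neg).measurableEmbedding
    fun _ _ h => neg_injective (exp_injective h)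

lemma laplaceMomentMeasure_injective : Function.Injective laplaceMomentMeasure := by
  intro A B h
  have hdens : A.withDensity (fun x => ENNReal.ofReal (exp (-x)))
      = B.withDensity fun x => ENNReal.ofReal (exp (-x)) := by
    simpa only [laplaceMomentMeasure, measurableEmbedding_exp_neg.comap_map]
      using congrArg (Measure.comap fun x => exp (-x)) h
  have hinv : ∀ C : Measure ℝ, (C.withDensity fun x => ENNReal.ofReal (exp (-x))).withDensity
      (fun x => (ENNReal.ofReal (exp (-x)))⁻¹) = C := fun C =>
    withDensity_inv_same (by fun_prop) (ae_of_all _ fun _ => by simp [exp_pos])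
      (ae_of_all _ fun _ => ENNReal.ofReal_ne_top)
  rw [← hinv A, hdens, hinv B]

variable {A : Measure ℝ}

lemma ae_mem_Icc_laplaceMomentMeasure (hA : ∀ᵐ x ∂A, 0 ≤ x) :
    ∀ᵐ y ∂laplaceMomentMeasure A, y ∈ Icc 0 1 := by
  refine (ae_map_iff (p := (· ∈ Icc (0 : ℝ) 1)) (by fun_prop) measurableSet_Icc).2 ?_
  refine (withDensity_absolutelyContinuous _ _).ae_le (hA.mono fun x hx => ?_)
  exact ⟨(exp_pos _).le, exp_le_one_iff.mpr (neg_nonpos.mpr hx)⟩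

lemma lintegral_pow_laplaceMomentMeasure (A : Measure ℝ) (n : ℕ) :
    ∫⁻ y, ENNReal.ofReal y ^ n ∂laplaceMomentMeasure A = laplace A (n + 1) := by
  rw [laplaceMomentMeasure, lintegral_map (by fun_prop) (by fun_prop),
    lintegral_withDensity_eq_lintegral_mul _ (by fun_prop) (by fun_prop)]
  refine lintegral_congr fun x => ?_
  rw [Pi.mul_apply, ← ENNReal.ofReal_pow (exp_pos _).le, ← ENNReal.ofReal_mul (exp_pos _).le,
    ← exp_nat_mul, ← exp_add]
  ring_nf

lemma isFiniteMeasure_laplaceMomentMeasure (h : laplace A 1 ≠ ∞) :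
    IsFiniteMeasure (laplaceMomentMeasure A) := by
  have h0 := lintegral_pow_laplaceMomentMeasure A 0
  simp only [pow_zero, lintegral_const, one_mul, Nat.cast_zero, zero_add] at h0
  exact ⟨h0 ▸ h.lt_top⟩

lemma integral_pow_laplaceMomentMeasure (hA : ∀ᵐ x ∂A, 0 ≤ x) (n : ℕ) :
    ∫ y, y ^ n ∂laplaceMomentMeasure A = (laplace A (n + 1)).toReal := by
  have hIcc := ae_mem_Icc_laplaceMomentMeasure hA
  rw [integral_eq_lintegral_of_nonneg_ae (hIcc.mono fun y hy => pow_nonneg hy.1 n) (by fun_prop),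
    ← lintegral_pow_laplaceMomentMeasure]
  exact congrArg _ (lintegral_congr_ae (hIcc.mono fun y hy => ENNReal.ofReal_pow hy.1 n))

theorem eq_of_laplace_natCast_add_one_eq {B : Measure ℝ} (hA : ∀ᵐ x ∂A, 0 ≤ x)
    (hB : ∀ᵐ x ∂B, 0 ≤ x) (hfin : laplace A 1 ≠ ∞)
    (h : ∀ n : ℕ, laplace A (n + 1) = laplace B (n + 1)) : A = B := by
  have := isFiniteMeasure_laplaceMomentMeasure hfin
  have h0 := h 0
  simp only [Nat.cast_zero, zero_add] at h0
  have := isFiniteMeasure_laplaceMomentMeasure (h0 ▸ hfin)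
  refine laplaceMomentMeasure_injective (eq_of_integral_pow_eq
    (ae_mem_Icc_laplaceMomentMeasure hA) (ae_mem_Icc_laplaceMomentMeasure hB) fun n => ?_)
  rw [integral_pow_laplaceMomentMeasure hA, integral_pow_laplaceMomentMeasure hB, h n]

end LaplaceUniqueness

section ConvPow

variable {M : Type*} [AddMonoid M] [MeasurableSpace M]

def convPow (ν : Measure M) : ℕ → Measure M
  | 0 => dirac 0
  | n + 1 => convPow ν n ∗ ν

/-- Formally `-log (δ₀ - ν)` in the convolution algebra. -/
def convLogSeries (ν : Measure M) : Measure M :=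
  Measure.sum fun k : ℕ => ((k : ℝ≥0∞) + 1)⁻¹ • convPow ν (k + 1)

end ConvPow

section ConvLogSeries

variable {ν : Measure ℝ}

lemma ae_add_le_conv {μ : Measure ℝ} {a b : ℝ} (hμ : ∀ᵐ x ∂μ, a ≤ x) (hν : ∀ᵐ y ∂ν, b ≤ y) :
    ∀ᵐ z ∂μ ∗ ν, a + b ≤ z := by
  refine (ae_map_iff (p := (a + b ≤ ·)) (by fun_prop) measurableSet_Ici).2 ?_
  filter_upwards [quasiMeasurePreserving_fst.ae hμ, quasiMeasurePreserving_snd.ae hν]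
    with z hz₁ hz₂
  exact add_le_add hz₁ hz₂

lemma ae_natCast_le_convPow (hν : ∀ᵐ x ∂ν, 1 ≤ x) (n : ℕ) : ∀ᵐ x ∂convPow ν n, (n : ℝ) ≤ x := by
  induction n with
  | zero => simp [convPow]
  | succ n ih => simpa [convPow] using ae_add_le_conv ih hν

lemma laplace_convPow [SFinite ν] (s : ℝ) (n : ℕ) : laplace (convPow ν n) s = laplace ν s ^ n := by
  induction n with
  | zero => simp [convPow, laplace]
  | succ n ih =>
    have hsplit : ∀ x y : ℝ, ENNReal.ofReal (exp (-s * (x + y)))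
        = ENNReal.ofReal (exp (-s * x)) * ENNReal.ofReal (exp (-s * y)) := fun x y => by
      rw [← ENNReal.ofReal_mul (exp_pos _).le, ← exp_add, mul_add]
    have hmeas : Measurable fun x : ℝ => ENNReal.ofReal (exp (-s * x)) := by fun_prop
    rw [convPow, laplace, lintegral_conv (by fun_prop)]
    simp_rw [hsplit, lintegral_const_mul _ hmeas]
    rw [lintegral_mul_const _ hmeas, ← laplace, ← laplace, ih, pow_succ]

lemma laplace_convLogSeries [SFinite ν] (s : ℝ) :
    laplace (convLogSeries ν) s = ∑' k : ℕ, ((k : ℝ≥0∞) + 1)⁻¹ * laplace ν s ^ (k + 1) := by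
  rw [laplace, convLogSeries, lintegral_sum_measure]
  refine tsum_congr fun k => ?_
  rw [lintegral_smul_measure, ← laplace, laplace_convPow, smul_eq_mul]

lemma ae_nonneg_convLogSeries (hν : ∀ᵐ x ∂ν, 1 ≤ x) : ∀ᵐ x ∂convLogSeries ν, 0 ≤ x :=
  ae_sum_iff.2 fun k => ae_smul_measure
    ((ae_natCast_le_convPow hν (k + 1)).mono fun _ hx => (Nat.cast_nonneg _).trans hx) _

lemma restrict_Iio_two_convLogSeries [SFinite ν] (hν : ∀ᵐ x ∂ν, 1 ≤ x) :
    (convLogSeries ν).restrict (Iio 2) = ν.restrict (Iio 2) := by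
  ext S hS
  rw [restrict_apply hS, restrict_apply hS, convLogSeries, sum_apply _ (hS.inter measurableSet_Iio),
    tsum_eq_single 0]
  · simp [convPow]
  · intro k hk
    have hnull : convPow ν (k + 1) (Iio 2) = 0 := by
      refine measure_eq_zero_iff_ae_notMem.2
        ((ae_natCast_le_convPow hν (k + 1)).mono fun x hx => ?_)
      have hk₂ : (2 : ℝ) ≤ k + 1 := by
        exact_mod_cast Nat.succ_le_succ (Nat.one_le_iff_ne_zero.2 hk)
      simp only [mem_Iio, not_lt]
      push_cast at hx
      linarith
    rw [Measure.smul_apply, measure_mono_null inter_subset_right hnull, smul_zero]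

lemma tsum_inv_mul_ofReal_pow_eq_ofReal_neg_log {x : ℝ} (h₀ : 0 ≤ x) (h₁ : x < 1) :
    ∑' k : ℕ, ((k : ℝ≥0∞) + 1)⁻¹ * ENNReal.ofReal x ^ (k + 1)
      = ENNReal.ofReal (-log (1 - x)) := by
  have hsum := hasSum_pow_div_log_of_abs_lt_one (abs_lt.2 ⟨by linarith, h₁⟩)
  have hterm : ∀ k : ℕ, 0 ≤ x ^ (k + 1) / (k + 1) := fun k => by positivity
  rw [← hsum.tsum_eq, ENNReal.ofReal_tsum_of_nonneg hterm hsum.summable]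
  refine tsum_congr fun k => ?_
  rw [div_eq_inv_mul, ENNReal.ofReal_mul (by positivity), ENNReal.ofReal_pow h₀,
    ENNReal.ofReal_inv_of_pos (by positivity)]
  norm_cast

lemma laplace_ne_top [IsFiniteMeasure ν] (hν : ∀ᵐ x ∂ν, 0 ≤ x) {s : ℝ} (hs : 0 ≤ s) :
    laplace ν s ≠ ∞ :=
  ne_top_of_le_ne_top (measure_ne_top ν univ) (laplace_le_measure_univ hν hs)

section LaplaceEquation

variable [IsFiniteMeasure ν] [NeZero ν] (hν : ∀ᵐ x ∂ν, 0 ≤ x) {s : ℝ} (hs : 0 ≤ s) {L : ℝ≥0∞}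
include hν hs

lemma ne_top_of_toReal_laplace_eq (h : (laplace ν s).toReal = 1 - exp (-L.toReal)) : L ≠ ∞ := by
  rintro rfl
  simp only [ENNReal.toReal_top, neg_zero, exp_zero, sub_self] at h
  exact ENNReal.toReal_ne_zero.2 ⟨laplace_ne_zero ν s, laplace_ne_top hν hs⟩ h

lemma laplace_convLogSeries_eq (h : (laplace ν s).toReal = 1 - exp (-L.toReal)) :
    laplace (convLogSeries ν) s = L := by
  have hlt : (laplace ν s).toReal < 1 := by
    rw [h]
    linarith [exp_pos (-L.toReal)]
  rw [laplace_convLogSeries, ← ENNReal.ofReal_toReal (laplace_ne_top hν hs),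
    tsum_inv_mul_ofReal_pow_eq_ofReal_neg_log ENNReal.toReal_nonneg hlt, h, sub_sub_cancel, log_exp,
    neg_neg, ENNReal.ofReal_toReal (ne_top_of_toReal_laplace_eq hν hs h)]

end LaplaceEquation

end ConvLogSeries

/-- The measure `m` of the paper. -/
def shiftInvWeight (t : Measure ℝ) : Measure ℝ :=
  ((t.restrict (Ici 0)).withDensity fun x => ENNReal.ofReal (1 + x)⁻¹).map (1 + ·)

lemma setLIntegral_shiftInvWeight (t : Measure ℝ) (s : ℝ) {S : Set ℝ} (hS : MeasurableSet S) :
    ∫⁻ x in S, ENNReal.ofReal (exp (-s * x)) ∂shiftInvWeight t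
      = ∫⁻ x in (1 + ·) ⁻¹' S ∩ Ici 0, ENNReal.ofReal (exp (-s * (1 + x)) / (1 + x)) ∂t := by
  have hS' : MeasurableSet ((1 + ·) ⁻¹' S : Set ℝ) := measurable_const_add 1 hS
  rw [shiftInvWeight, setLIntegral_map hS (by fun_prop) (by fun_prop), restrict_withDensity hS',
    lintegral_withDensity_eq_lintegral_mul _ (by fun_prop) (by fun_prop), restrict_restrict hS']
  refine lintegral_congr fun x => ?_
  rw [Pi.mul_apply, div_eq_mul_inv, ENNReal.ofReal_mul (exp_pos _).le, mul_comm]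

lemma laplace_shiftInvWeight (t : Measure ℝ) (s : ℝ) :
    laplace (shiftInvWeight t) s
      = ∫⁻ x in Ici 0, ENNReal.ofReal (exp (-s * (1 + x)) / (1 + x)) ∂t := by
  rw [laplace, ← setLIntegral_univ, setLIntegral_shiftInvWeight t s MeasurableSet.univ,
    preimage_univ, univ_inter]

lemma setLIntegral_Iio_shiftInvWeight (t : Measure ℝ) (s c : ℝ) :
    ∫⁻ x in Iio c, ENNReal.ofReal (exp (-s * x)) ∂shiftInvWeight t
      = ∫⁻ x in Ico 0 (c - 1), ENNReal.ofReal (exp (-s * (1 + x)) / (1 + x)) ∂t := by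
  have hset : (1 + ·) ⁻¹' Iio c ∩ Ici 0 = Ico (0 : ℝ) (c - 1) := by
    ext x
    simp only [mem_inter_iff, mem_preimage, mem_Iio, mem_Ici, mem_Ico]
    constructor <;> rintro ⟨h₁, h₂⟩ <;> constructor <;> linarith
  rw [setLIntegral_shiftInvWeight t s measurableSet_Iio, hset]

lemma ae_nonneg_shiftInvWeight (t : Measure ℝ) : ∀ᵐ x ∂shiftInvWeight t, 0 ≤ x := by
  refine (ae_map_iff (p := (0 ≤ ·)) (by fun_prop) measurableSet_Ici).2 ?_
  refine (withDensity_absolutelyContinuous _ _).ae_le ?_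
  filter_upwards [ae_restrict_mem measurableSet_Ici] with x (hx : 0 ≤ x)
  linarith

theorem stmt9_general {Ω : Type*} [MeasurableSpace Ω] (μ : Measure Ω) [IsProbabilityMeasure μ]
    (Z : Ω → ℝ) (hZm : Measurable Z) (hZ1 : ∀ᵐ ω ∂μ, 1 ≤ Z ω)
    (t : Measure ℝ)
    (hlap : ∀ s : ℝ, 0 < s →
      ∫ ω, Real.exp (-s * Z ω) ∂μ
        = 1 - Real.exp
            (-(∫⁻ x in Set.Ici (0 : ℝ),
                ENNReal.ofReal (Real.exp (-s * (1 + x)) / (1 + x)) ∂t).toReal))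
    (a : ℝ) (ha : a ∈ Set.Ioc (1 : ℝ) 2) (s : ℝ) :
    ∫ ω in {ω | Z ω < a}, Real.exp (-s * Z ω) ∂μ
      = (∫⁻ x in Set.Ico (0 : ℝ) (a - 1),
          ENNReal.ofReal (Real.exp (-s * (1 + x)) / (1 + x)) ∂t).toReal := by
  set ν := μ.map Z
  have : IsProbabilityMeasure ν := isProbabilityMeasure_map hZm.aemeasurable
  have hν : ∀ᵐ x ∂ν, 1 ≤ x := (ae_map_iff (p := (1 ≤ ·)) hZm.aemeasurable measurableSet_Ici).2 hZ1
  have hν₀ : ∀ᵐ x ∂ν, 0 ≤ x := hν.mono fun _ hx => zero_le_one.trans hx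
  have hlapν : ∀ r : ℝ, 0 < r →
      (laplace ν r).toReal = 1 - exp (-(laplace (shiftInvWeight t) r).toReal) := fun r hr => by
    rw [← integral_exp_neg_mul_eq_toReal_laplace, integral_map hZm.aemeasurable (by fun_prop),
      laplace_shiftInvWeight]
    exact hlap r hr
  have hm : shiftInvWeight t = convLogSeries ν :=
    eq_of_laplace_natCast_add_one_eq (ae_nonneg_shiftInvWeight t) (ae_nonneg_convLogSeries hν)
      (ne_top_of_toReal_laplace_eq hν₀ zero_le_one (hlapν 1 one_pos)) fun n =>
        (laplace_convLogSeries_eq hν₀ (by positivity) (hlapν _ (by positivity))).symm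
  have hrestr : ν.restrict (Iio a) = (shiftInvWeight t).restrict (Iio a) := by
    have hsub : Iio a ⊆ Iio 2 := Iio_subset_Iio ha.2
    rw [hm, ← restrict_restrict_of_subset (μ := convLogSeries ν) hsub,
      restrict_Iio_two_convLogSeries hν, restrict_restrict_of_subset hsub]
  rw [show {ω | Z ω < a} = Z ⁻¹' Iio a from rfl,
    ← setIntegral_map (f := fun x => exp (-s * x)) measurableSet_Iio (by fun_prop) hZm.aemeasurable,
    integral_exp_neg_mul_eq_toReal_laplace, laplace, hrestr, setLIntegral_Iio_shiftInvWeight]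

/-- `E[e^{-sZ}; Z < a] = ∫_{[0,a-1)} e^{-s(1+x)}/(1+x) t(dx)` for `a ∈ (1,2]`, in the setting
where the Laplace transform of `Z ≥ 1` has the integral representation via the measure `t`. -/
theorem stmt9 {Ω : Type*} [MeasurableSpace Ω] (μ : Measure Ω) [IsProbabilityMeasure μ]
    (Z : Ω → ℝ) (hZm : Measurable Z) (hZ1 : ∀ᵐ ω ∂μ, 1 ≤ Z ω)
    (t : Measure ℝ) [IsLocallyFiniteMeasure t] (ht : t (Set.Iio 0) = 0)
    (hfin : ∀ s : ℝ, 0 < s →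
      (∫⁻ x in Set.Ici (0 : ℝ), ENNReal.ofReal (Real.exp (-s * (1 + x)) / (1 + x)) ∂t) ≠ ⊤)
    (hlap : ∀ s : ℝ, 0 < s →
      ∫ ω, Real.exp (-s * Z ω) ∂μ
        = 1 - Real.exp
            (-(∫⁻ x in Set.Ici (0 : ℝ),
                ENNReal.ofReal (Real.exp (-s * (1 + x)) / (1 + x)) ∂t).toReal))
    (a : ℝ) (ha : a ∈ Set.Ioc (1 : ℝ) 2) (s : ℝ) (hs : 0 ≤ s) :
    ∫ ω in {ω | Z ω < a}, Real.exp (-s * Z ω) ∂μ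
      = (∫⁻ x in Set.Ico (0 : ℝ) (a - 1),
          ENNReal.ofReal (Real.exp (-s * (1 + x)) / (1 + x)) ∂t).toReal :=
  stmt9_general μ Z hZm hZ1 t hlap a ha s
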